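/- arXiv:2303.07259 — 2 statements merged into one kernel-verified Lean document; each statement's English description precedes it below -/
import Mathlib

section
/- Under Assumptions A1–A3, for any ξ with 1/α < ξ < 1/2 and Λ_n := {λ ∈ ℝ^r : ‖λ‖ ≤ n^{−ξ}}: (i) sup over θ ∈ Θ̄, λ ∈ Λ_n and 1 ≤ k ≤ K of |λᵀ ḡ^{(k)}(θ)| is O_p(n^{−ξ+1/α}) and converges to 0 in probability as n → ∞; (ii) with probability tending to 1, Λ_n ⊆ Λ̂_K(θ) for all θ ∈ Θ̄. -/
open MeasureTheory ProbabilityTheory Filter Real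
open scoped BigOperators ENNReal Topology RealInnerProductSpace Matrix

noncomputable section

/-- `Z n = O_p(a n)`: for every `ε > 0` there are `M > 0` and `N` such that
`P(‖Z n‖ > M * a n) < ε` for all `n ≥ N`. -/
def IsBigOp {Ω : Type*} [MeasurableSpace Ω] (μ : Measure Ω) {E : Type*} [NormedAddCommGroup E]
    (Z : ℕ → Ω → E) (a : ℕ → ℝ) : Prop :=
  ∀ ε : ℝ, 0 < ε → ∃ M : ℝ, 0 < M ∧ ∃ N : ℕ, ∀ n ≥ N,
    μ {ω | M * a n < ‖Z n ω‖} < ENNReal.ofReal ε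

/-- Convergence in distribution of the random vectors `Z n` (on `(Ω, μ)`) to the law `ν`,
phrased via integrals of bounded continuous test functions. -/
def TendstoInDistribution {Ω : Type*} [MeasurableSpace Ω] (μ : Measure Ω)
    {E : Type*} [TopologicalSpace E] [MeasurableSpace E] (Z : ℕ → Ω → E) (ν : Measure E) : Prop :=
  ∀ f : BoundedContinuousFunction E ℝ,
    Tendsto (fun n => ∫ ω, f (Z n ω) ∂μ) atTop (𝓝 (∫ x, f x ∂ν))

/-- The centered multivariate normal law `N(0, S)` on `ℝ^p`, given by its density. -/
def mvNormalZero {p : ℕ} (S : Matrix (Fin p) (Fin p) ℝ) :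
    Measure (EuclideanSpace ℝ (Fin p)) :=
  volume.withDensity fun x =>
    ENNReal.ofReal (((2 * π) ^ p * S.det) ^ (-(1/2 : ℝ)) *
      Real.exp (-(1/2 : ℝ) * ∑ i, x i * (S⁻¹).mulVec (fun j => x j) i))

/-- Frobenius norm of a real matrix. -/
def frobNorm {r p : ℕ} (M : Matrix (Fin r) (Fin p) ℝ) : ℝ :=
  Real.sqrt (∑ i, ∑ j, (M i j) ^ 2)

/-- The subset mean estimating function `ḡ^{(k)}(θ) = m⁻¹ ∑_{i=1}^m g(x_i^{(k)}, θ)`,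
where the `k`-th subset consists of the samples with indices `k*m, …, k*m + m - 1`. -/
def gbar {d r p : ℕ} {Ω : Type*}
    (g : EuclideanSpace ℝ (Fin d) → EuclideanSpace ℝ (Fin p) → EuclideanSpace ℝ (Fin r))
    (X : ℕ → Ω → EuclideanSpace ℝ (Fin d)) (m k : ℕ)
    (θ : EuclideanSpace ℝ (Fin p)) (ω : Ω) : EuclideanSpace ℝ (Fin r) :=
  (m : ℝ)⁻¹ • ∑ i ∈ Finset.range m, g (X (k * m + i) ω) θ

/-- `Λ̂_K(θ) = {λ : λᵀ ḡ^{(k)}(θ) ∈ V, k = 1, …, K}`. -/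
def LamHat {d r p : ℕ} {Ω : Type*}
    (g : EuclideanSpace ℝ (Fin d) → EuclideanSpace ℝ (Fin p) → EuclideanSpace ℝ (Fin r))
    (X : ℕ → Ω → EuclideanSpace ℝ (Fin d)) (V : Set ℝ) (K m : ℕ)
    (θ : EuclideanSpace ℝ (Fin p)) (ω : Ω) : Set (EuclideanSpace ℝ (Fin r)) :=
  {lam | ∀ k < K, ⟪lam, gbar g X m k θ ω⟫ ∈ V}

/-- The SSMEL criterion `ℓ_S(θ, λ) = ∑_{k=1}^K log(1 + λᵀ ḡ^{(k)}(θ))`. -/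
def ellS {d r p : ℕ} {Ω : Type*}
    (g : EuclideanSpace ℝ (Fin d) → EuclideanSpace ℝ (Fin p) → EuclideanSpace ℝ (Fin r))
    (X : ℕ → Ω → EuclideanSpace ℝ (Fin d)) (K m : ℕ)
    (θ : EuclideanSpace ℝ (Fin p)) (lam : EuclideanSpace ℝ (Fin r)) (ω : Ω) : ℝ :=
  ∑ k ∈ Finset.range K, Real.log (1 + ⟪lam, gbar g X m k θ ω⟫)

/-- The profile SSMEL objective `ℓ_S(θ) = sup_{λ ∈ Λ̂_K(θ)} ℓ_S(θ, λ)`. -/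
def ellSProf {d r p : ℕ} {Ω : Type*}
    (g : EuclideanSpace ℝ (Fin d) → EuclideanSpace ℝ (Fin p) → EuclideanSpace ℝ (Fin r))
    (X : ℕ → Ω → EuclideanSpace ℝ (Fin d)) (V : Set ℝ) (K m : ℕ)
    (θ : EuclideanSpace ℝ (Fin p)) (ω : Ω) : ℝ :=
  sSup ((fun lam => ellS g X K m θ lam ω) '' LamHat g X V K m θ ω)

/-!
Let `Y(x) = sup_{θ ∈ Θ̄} ‖g(x, θ)‖`. Every `ḡ^{(k)}(θ)` is an average of values `g(X_i, θ)`
with `i < n`, so `|λᵀ ḡ^{(k)}(θ)| ≤ ‖λ‖ max_{i<n} Y(X_i)` uniformly in `θ` and `k`. By the union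
bound and Markov's inequality for `Y^α`, `P(max_{i<n} Y(X_i) > s) ≤ n E[Y^α] / s^α`; taking
`s = M n^{1/α}` gives the `O_p` bound in (i), and taking `s = c n^ξ` gives a bound of order `n^{1 - ξα} → 0`,
which yields the convergence in (i) and, since `𝒱` contains a neighbourhood of `0`, also (ii).
-/

open Finset

theorem IsCompact.le_biSup_of_continuousOn {P : Type*} [TopologicalSpace P] {Θ : Set P}
    (hΘ : IsCompact Θ) {f : P → ℝ} (hf : ContinuousOn f Θ) {θ : P} (hθ : θ ∈ Θ) :
    f θ ≤ ⨆ θ' ∈ Θ, f θ' := by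
  refine le_ciSup₂ (f := fun θ' (_ : θ' ∈ Θ) => f θ') ((hΘ.bddAbove_image hf).mono ?_) θ hθ
  intro y hy
  obtain ⟨θ', hθ', rfl⟩ := by simpa only [Set.mem_iUnion, Set.mem_range] using hy
  exact ⟨θ', hθ', rfl⟩

section Probability

variable {Ω E : Type*} [MeasurableSpace Ω] [MeasurableSpace E] {μ : Measure Ω} {ν : Measure E}

theorem measure_exists_lt_mem_le {X : ℕ → Ω → E} (hX : ∀ i, AEMeasurable (X i) μ)
    (hident : ∀ i, μ.map (X i) = ν) (A : Set E) (n : ℕ) :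
    μ {ω | ∃ i < n, X i ω ∈ A} ≤ n * ν A :=
  calc μ {ω | ∃ i < n, X i ω ∈ A} = μ (⋃ i ∈ range n, X i ⁻¹' A) := by
        congr 1; ext; simp
    _ ≤ ∑ i ∈ range n, μ (X i ⁻¹' A) := measure_biUnion_finset_le _ _
    _ ≤ ∑ _i ∈ range n, ν A := sum_le_sum fun i _ => hident i ▸ Measure.le_map_apply (hX i) A
    _ = n * ν A := by simp

theorem measure_lt_le_ofReal_integral_rpow_div {Y : E → ℝ} {α : ℝ} (hα : 0 < α)
    (hY0 : ∀ x, 0 ≤ Y x) (hY : Integrable (fun x => Y x ^ α) ν) {s : ℝ} (hs : 0 < s) :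
    ν {x | s < Y x} ≤ ENNReal.ofReal ((∫ x, Y x ^ α ∂ν) / s ^ α) := by
  have hsα : 0 < s ^ α := rpow_pos_of_pos hs α
  calc ν {x | s < Y x} ≤ ν {x | ENNReal.ofReal (s ^ α) ≤ ENNReal.ofReal (Y x ^ α)} :=
        measure_mono fun x hx => ENNReal.ofReal_le_ofReal (rpow_le_rpow hs.le (le_of_lt hx) hα.le)
    _ ≤ (∫⁻ x, ENNReal.ofReal (Y x ^ α) ∂ν) / ENNReal.ofReal (s ^ α) :=
        meas_ge_le_lintegral_div hY.1.aemeasurable.ennreal_ofReal (by positivity)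
          ENNReal.ofReal_ne_top
    _ = ENNReal.ofReal ((∫ x, Y x ^ α ∂ν) / s ^ α) := by
        rw [← ofReal_integral_eq_lintegral_ofReal hY
          (ae_of_all _ fun x => rpow_nonneg (hY0 x) α), ENNReal.ofReal_div_of_pos hsα]

theorem tendsto_measure_of_tendsto_measure_compl [IsProbabilityMeasure μ] {ι : Type*}
    {l : Filter ι} {S : ι → Set Ω} (h : Tendsto (fun i => μ (S i)ᶜ) l (𝓝 0)) :
    Tendsto (fun i => μ (S i)) l (𝓝 1) := by
  have hlow : Tendsto (fun i => 1 - μ (S i)ᶜ) l (𝓝 1) := by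
    simpa using ENNReal.Tendsto.sub tendsto_const_nhds h (Or.inl ENNReal.one_ne_top)
  refine tendsto_of_tendsto_of_tendsto_of_le_of_le hlow tendsto_const_nhds (fun i => ?_)
    (fun i => prob_le_one)
  rw [tsub_le_iff_right, ← measure_univ (μ := μ)]
  exact measure_univ_le_add_compl _

theorem measure_exists_lt_norm_le {P F : Type*} [TopologicalSpace P] [NormedAddCommGroup F]
    {X : ℕ → Ω → E} (hX : ∀ i, AEMeasurable (X i) μ) (hident : ∀ i, μ.map (X i) = ν)
    {Θ : Set P} (hΘ : IsCompact Θ) {g : E → P → F} (hg : ∀ᵐ x ∂ν, ContinuousOn (g x) Θ)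
    {α : ℝ} (hα : 0 < α) (hmoment : Integrable (fun x => (⨆ θ ∈ Θ, ‖g x θ‖) ^ α) ν)
    (n : ℕ) {s : ℝ} (hs : 0 < s) :
    μ {ω | ∃ i < n, ∃ θ ∈ Θ, s < ‖g (X i ω) θ‖}
      ≤ ENNReal.ofReal (n * (∫ x, (⨆ θ ∈ Θ, ‖g x θ‖) ^ α ∂ν) / s ^ α) := by
  -- where `g x` is unbounded on `Θ` the real `⨆` is junk, hence the discontinuity points in `A`
  set A := {x | ¬ ContinuousOn (g x) Θ} ∪ {x | s < ⨆ θ ∈ Θ, ‖g x θ‖}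
  have hsub : {ω | ∃ i < n, ∃ θ ∈ Θ, s < ‖g (X i ω) θ‖} ⊆ {ω | ∃ i < n, X i ω ∈ A} := by
    rintro ω ⟨i, hi, θ, hθ, hlt⟩
    refine ⟨i, hi, or_iff_not_imp_left.2 fun hcont => ?_⟩
    exact hlt.trans_le (hΘ.le_biSup_of_continuousOn
      (continuous_norm.comp_continuousOn (not_not.1 hcont)) hθ)
  have hA : ν A ≤ ENNReal.ofReal ((∫ x, (⨆ θ ∈ Θ, ‖g x θ‖) ^ α ∂ν) / s ^ α) :=
    calc ν A ≤ ν {x | ¬ ContinuousOn (g x) Θ} + ν {x | s < ⨆ θ ∈ Θ, ‖g x θ‖} :=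
          measure_union_le _ _
      _ = ν {x | s < ⨆ θ ∈ Θ, ‖g x θ‖} := by rw [ae_iff.1 hg, zero_add]
      _ ≤ _ := measure_lt_le_ofReal_integral_rpow_div hα
          (fun x => Real.iSup_nonneg fun θ => Real.iSup_nonneg fun _ => norm_nonneg _) hmoment hs
  calc μ {ω | ∃ i < n, ∃ θ ∈ Θ, s < ‖g (X i ω) θ‖} ≤ μ {ω | ∃ i < n, X i ω ∈ A} :=
        measure_mono hsub
    _ ≤ n * ν A := measure_exists_lt_mem_le hX hident A n
    _ ≤ n * ENNReal.ofReal ((∫ x, (⨆ θ ∈ Θ, ‖g x θ‖) ^ α ∂ν) / s ^ α) := by gcongr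
    _ = _ := by rw [mul_div_assoc, ENNReal.ofReal_mul (Nat.cast_nonneg n), ENNReal.ofReal_natCast]

end Probability

section Tails

variable {Ω : Type*} [MeasurableSpace Ω] {μ : Measure Ω} {C α ξ : ℝ}

theorem tendsto_measure_of_tail_le {S : ℕ → ℝ → Set Ω}
    (htail : ∀ n : ℕ, ∀ s > 0, μ (S n ((n : ℝ) ^ (-ξ) * s)) ≤ ENNReal.ofReal (n * C / s ^ α))
    (hξα : 1 < ξ * α) {t : ℝ} (ht : 0 < t) : Tendsto (fun n => μ (S n t)) atTop (𝓝 0) := by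
  have hlim : Tendsto (fun n : ℕ => C / t ^ α * (n : ℝ) ^ (1 - ξ * α)) atTop (𝓝 0) := by
    simpa [neg_sub] using ((tendsto_rpow_neg_atTop (by linarith : 0 < ξ * α - 1)).comp
      tendsto_natCast_atTop_atTop).const_mul (C / t ^ α)
  refine tendsto_of_tendsto_of_tendsto_of_le_of_le' tendsto_const_nhds
    (by simpa using (ENNReal.continuous_ofReal.tendsto 0).comp hlim)
    (Eventually.of_forall fun _ => zero_le) ?_
  filter_upwards [eventually_gt_atTop 0] with n hn
  have hn' : (0 : ℝ) < n := Nat.cast_pos.2 hn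
  have hscale : (n : ℝ) ^ (-ξ) * (t * (n : ℝ) ^ ξ) = t := by
    rw [mul_left_comm, ← rpow_add hn', neg_add_cancel, rpow_zero, mul_one]
  have h := htail n (t * (n : ℝ) ^ ξ) (mul_pos ht (rpow_pos_of_pos hn' ξ))
  rw [hscale] at h
  refine h.trans_eq (congrArg ENNReal.ofReal ?_)
  beta_reduce
  rw [mul_rpow ht.le (rpow_nonneg hn'.le ξ), ← rpow_mul hn'.le, rpow_sub hn', rpow_one]
  ring

theorem isBigOp_of_tail_le {E : Type*} [NormedAddCommGroup E] {T : ℕ → Ω → E}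
    (htail : ∀ n : ℕ, ∀ s > 0,
      μ {ω | (n : ℝ) ^ (-ξ) * s < ‖T n ω‖} ≤ ENNReal.ofReal (n * C / s ^ α))
    (hC : 0 ≤ C) (hα : 0 < α) : IsBigOp μ T (fun n => (n : ℝ) ^ (-ξ + 1 / α)) := by
  intro ε hε
  set M := (C / ε + 1) ^ (1 / α)
  have hM : 0 < M := by positivity
  have hMα : M ^ α = C / ε + 1 := by
    rw [← rpow_mul (by positivity), one_div_mul_cancel hα.ne', rpow_one]
  refine ⟨M, hM, 1, fun n hn => ?_⟩
  have hn' : (0 : ℝ) < n := by exact_mod_cast hn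
  have hrate : M * (n : ℝ) ^ (-ξ + 1 / α) = (n : ℝ) ^ (-ξ) * (M * (n : ℝ) ^ (1 / α)) := by
    rw [rpow_add hn']; ring
  have hbound : n * C / (M * (n : ℝ) ^ (1 / α)) ^ α = C / M ^ α := by
    rw [mul_rpow hM.le (rpow_nonneg hn'.le _), ← rpow_mul hn'.le, one_div_mul_cancel hα.ne',
      rpow_one]
    field_simp
  calc μ {ω | M * (n : ℝ) ^ (-ξ + 1 / α) < ‖T n ω‖} ≤ ENNReal.ofReal (C / M ^ α) := by
        rw [hrate, ← hbound]; exact htail n _ (mul_pos hM (rpow_pos_of_pos hn' _))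
    _ < ENNReal.ofReal ε := by
        rw [ENNReal.ofReal_lt_ofReal_iff hε, hMα, div_lt_iff₀ (by positivity), mul_add,
          mul_div_cancel₀ _ hε.ne', mul_one]
        linarith

theorem tendstoInMeasure_zero_of_tail_le {E : Type*} [NormedAddCommGroup E] {T : ℕ → Ω → E}
    (htail : ∀ n : ℕ, ∀ s > 0,
      μ {ω | (n : ℝ) ^ (-ξ) * s < ‖T n ω‖} ≤ ENNReal.ofReal (n * C / s ^ α))
    (hξα : 1 < ξ * α) : TendstoInMeasure μ T atTop (fun _ => 0) := by
  rw [tendstoInMeasure_iff_dist]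
  intro ε hε
  refine tendsto_of_tendsto_of_tendsto_of_le_of_le tendsto_const_nhds
    (tendsto_measure_of_tail_le (S := fun n t => {ω | t < ‖T n ω‖}) htail hξα (half_pos hε))
    (fun _ => zero_le) fun n => measure_mono fun ω hω => ?_
  simp only [Set.mem_ofPred_eq, dist_zero_right] at hω ⊢
  linarith

end Tails

section SubsetMeans

variable {d p r : ℕ} {Ω : Type*}
  (g : EuclideanSpace ℝ (Fin d) → EuclideanSpace ℝ (Fin p) → EuclideanSpace ℝ (Fin r))
  (X : ℕ → Ω → EuclideanSpace ℝ (Fin d))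

theorem norm_gbar_le {m k : ℕ} {θ : EuclideanSpace ℝ (Fin p)} {ω : Ω} {s : ℝ} (hs : 0 ≤ s)
    (h : ∀ i < m, ‖g (X (k * m + i) ω) θ‖ ≤ s) : ‖gbar g X m k θ ω‖ ≤ s := by
  rcases Nat.eq_zero_or_pos m with rfl | hm
  · simpa [gbar] using hs
  have hsum : ‖∑ i ∈ range m, g (X (k * m + i) ω) θ‖ ≤ m * s := by
    simpa using norm_sum_le_of_le (range m) fun i hi => h i (mem_range.1 hi)
  rw [gbar, norm_smul, norm_inv, Real.norm_natCast, inv_mul_le_iff₀ (by positivity)]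
  exact hsum

theorem abs_inner_gbar_le {n K m k : ℕ} (hKm : K * m = n) (hk : k < K)
    {θ : EuclideanSpace ℝ (Fin p)} {ω : Ω} {lam : EuclideanSpace ℝ (Fin r)} {ρ s : ℝ}
    (hlam : ‖lam‖ ≤ ρ) (hs : 0 ≤ s) (h : ∀ i < n, ‖g (X i ω) θ‖ ≤ s) :
    |⟪lam, gbar g X m k θ ω⟫| ≤ ρ * s := by
  have hindex : ∀ i < m, k * m + i < n := fun i hi =>
    calc k * m + i < (k + 1) * m := by rw [add_one_mul]; omega
      _ ≤ K * m := Nat.mul_le_mul_right m hk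
      _ = n := hKm
  calc |⟪lam, gbar g X m k θ ω⟫| ≤ ‖lam‖ * ‖gbar g X m k θ ω‖ := abs_real_inner_le_norm _ _
    _ ≤ ρ * s := mul_le_mul hlam (norm_gbar_le g X hs fun i hi => h _ (hindex i hi))
        (norm_nonneg _) ((norm_nonneg _).trans hlam)

def gbarInnerExceedance (Θ : Set (EuclideanSpace ℝ (Fin p))) (ρ : ℝ) (K m : ℕ) (t : ℝ) :
    Set Ω :=
  {ω | ∃ θ ∈ Θ, ∃ lam : EuclideanSpace ℝ (Fin r), ‖lam‖ ≤ ρ ∧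
    ∃ k < K, t < |⟪lam, gbar g X m k θ ω⟫|}

def supAbsInnerGbar (Θ : Set (EuclideanSpace ℝ (Fin p))) (ρ : ℝ) (K m : ℕ) (ω : Ω) : ℝ :=
  ⨆ θ ∈ Θ, ⨆ lam ∈ {l : EuclideanSpace ℝ (Fin r) | ‖l‖ ≤ ρ},
    ⨆ k ∈ Finset.range K, |⟪lam, gbar g X m k θ ω⟫|

theorem measure_gbarInnerExceedance_le [MeasurableSpace Ω] {μ : Measure Ω}
    {ν : Measure (EuclideanSpace ℝ (Fin d))} (hX : ∀ i, AEMeasurable (X i) μ)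
    (hident : ∀ i, μ.map (X i) = ν) {Θ : Set (EuclideanSpace ℝ (Fin p))} (hΘ : IsCompact Θ)
    (hg : ∀ᵐ x ∂ν, ContinuousOn (g x) Θ) {α : ℝ} (hα : 0 < α)
    (hmoment : Integrable (fun x => (⨆ θ ∈ Θ, ‖g x θ‖) ^ α) ν) {n K m : ℕ} (hKm : K * m = n)
    {ρ s : ℝ} (hs : 0 < s) :
    μ (gbarInnerExceedance g X Θ ρ K m (ρ * s))
      ≤ ENNReal.ofReal (n * (∫ x, (⨆ θ ∈ Θ, ‖g x θ‖) ^ α ∂ν) / s ^ α) := by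
  refine (measure_mono fun ω hω => ?_).trans
    (measure_exists_lt_norm_le hX hident hΘ hg hα hmoment n hs)
  obtain ⟨θ, hθ, lam, hlam, k, hk, hlt⟩ := hω
  by_contra hsmall
  simp only [Set.mem_ofPred_eq] at hsmall
  push Not at hsmall
  exact hlt.not_ge (abs_inner_gbar_le g X hKm hk hlam hs.le fun i hi => hsmall i hi θ hθ)

theorem setOf_lt_norm_supAbsInnerGbar_subset {Θ : Set (EuclideanSpace ℝ (Fin p))} {ρ : ℝ}
    {K m : ℕ} {t : ℝ} (ht : 0 ≤ t) :
    {ω | t < ‖supAbsInnerGbar g X Θ ρ K m ω‖} ⊆ gbarInnerExceedance g X Θ ρ K m t := by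
  intro ω hlt
  by_contra hω
  simp only [gbarInnerExceedance, Set.mem_ofPred_eq] at hω hlt
  push Not at hω
  have hnonneg : 0 ≤ supAbsInnerGbar g X Θ ρ K m ω :=
    Real.iSup_nonneg fun θ => Real.iSup_nonneg fun _ => Real.iSup_nonneg fun lam =>
      Real.iSup_nonneg fun _ => Real.iSup_nonneg fun k => Real.iSup_nonneg fun _ => abs_nonneg _
  refine hlt.not_ge ((Real.norm_of_nonneg hnonneg).trans_le ?_)
  exact Real.iSup_le (fun θ => Real.iSup_le (fun hθ => Real.iSup_le (fun lam =>
    Real.iSup_le (fun hlam => Real.iSup_le (fun k => Real.iSup_le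
      (fun hk => hω θ hθ lam hlam k (mem_range.1 hk)) ht) ht) ht) ht) ht) ht

theorem compl_setOf_forall_subset_lamHat_subset {V : Set ℝ} {t : ℝ}
    (hV : Metric.closedBall 0 t ⊆ V) (Θ : Set (EuclideanSpace ℝ (Fin p))) (ρ : ℝ) (K m : ℕ) :
    {ω | ∀ θ ∈ Θ, {l : EuclideanSpace ℝ (Fin r) | ‖l‖ ≤ ρ} ⊆ LamHat g X V K m θ ω}ᶜ
      ⊆ gbarInnerExceedance g X Θ ρ K m t := by
  intro ω hω
  by_contra hsmall
  refine hω fun θ hθ lam hlam k hk => hV ?_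
  rw [Metric.mem_closedBall, dist_zero_right, Real.norm_eq_abs]
  by_contra hlt
  exact hsmall ⟨θ, hθ, lam, hlam, k, hk, not_le.1 hlt⟩

end SubsetMeans

theorem ssmel_lemma1_general
    {d p r : ℕ}
    {Ω : Type} [MeasurableSpace Ω] (μ : Measure Ω) [IsProbabilityMeasure μ]
    (X : ℕ → Ω → EuclideanSpace ℝ (Fin d))
    (hXmeas : ∀ i, Measurable (X i))
    (hXident : ∀ i, μ.map (X i) = μ.map (X 0))
    (g : EuclideanSpace ℝ (Fin d) → EuclideanSpace ℝ (Fin p) → EuclideanSpace ℝ (Fin r))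
    (Θbar : Set (EuclideanSpace ℝ (Fin p)))
    -- (A1)
    (hΘcompact : IsCompact Θbar)
    -- (A2)
    (hgcont : ∀ᵐ x ∂(μ.map (X 0)), ContinuousOn (fun θ => g x θ) Θbar)
    -- (A3)
    (α : ℝ) (hα : 2 < α)
    (hgmoment : Integrable (fun x => (⨆ θ ∈ Θbar, ‖g x θ‖) ^ α) (μ.map (X 0)))
    -- sample splitting: n = K n * m n subsets of size m n, K n → ∞
    (K m : ℕ → ℕ) (hKm : ∀ n, K n * m n = n)
    -- the open interval 𝒱 ∋ 0
    (V : Set ℝ) (hVopen : IsOpen V) (hV0 : (0:ℝ) ∈ V)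
    :
    ∀ ξ : ℝ, 1 / α < ξ → ξ < 1 / 2 →
      (IsBigOp μ
        (fun n ω => ⨆ θ ∈ Θbar, ⨆ lam ∈ {l : EuclideanSpace ℝ (Fin r) | ‖l‖ ≤ (n : ℝ) ^ (-ξ)},
          ⨆ k ∈ Finset.range (K n), |⟪lam, gbar g X (m n) k θ ω⟫|)
        (fun n => (n : ℝ) ^ (-ξ + 1 / α))
      ∧ TendstoInMeasure μ
        (fun (n : ℕ) ω => ⨆ θ ∈ Θbar, ⨆ lam ∈ {l : EuclideanSpace ℝ (Fin r) | ‖l‖ ≤ (n : ℝ) ^ (-ξ)},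
          ⨆ k ∈ Finset.range (K n), |⟪lam, gbar g X (m n) k θ ω⟫|)
        atTop (fun _ => 0))
      ∧ Tendsto
        (fun (n : ℕ) => μ {ω | ∀ θ ∈ Θbar,
          {l : EuclideanSpace ℝ (Fin r) | ‖l‖ ≤ (n : ℝ) ^ (-ξ)}
            ⊆ LamHat g X V (K n) (m n) θ ω})
        atTop (𝓝 1) := by
  intro ξ hαξ _
  have hα0 : 0 < α := by linarith
  have hξα : 1 < ξ * α := by rwa [div_lt_iff₀ hα0] at hαξ
  set C := ∫ x, (⨆ θ ∈ Θbar, ‖g x θ‖) ^ α ∂(μ.map (X 0))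
  have hC : 0 ≤ C := integral_nonneg fun x =>
    rpow_nonneg (Real.iSup_nonneg fun θ => Real.iSup_nonneg fun _ => norm_nonneg _) α
  have tail : ∀ n : ℕ, ∀ s > 0,
      μ (gbarInnerExceedance g X Θbar ((n : ℝ) ^ (-ξ)) (K n) (m n) ((n : ℝ) ^ (-ξ) * s))
        ≤ ENNReal.ofReal (n * C / s ^ α) := fun n s hs =>
    measure_gbarInnerExceedance_le g X (fun i => (hXmeas i).aemeasurable) hXident hΘcompact
      hgcont hα0 hgmoment (hKm n) hs
  have tailSup : ∀ n : ℕ, ∀ s > 0,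
      μ {ω | (n : ℝ) ^ (-ξ) * s < ‖supAbsInnerGbar g X Θbar ((n : ℝ) ^ (-ξ)) (K n) (m n) ω‖}
        ≤ ENNReal.ofReal (n * C / s ^ α) := fun n s hs =>
    (measure_mono (setOf_lt_norm_supAbsInnerGbar_subset g X
      (mul_nonneg (rpow_nonneg n.cast_nonneg _) hs.le))).trans (tail n s hs)
  obtain ⟨δ, hδ, hball⟩ := Metric.isOpen_iff.1 hVopen 0 hV0
  refine ⟨⟨isBigOp_of_tail_le tailSup hC hα0, tendstoInMeasure_zero_of_tail_le tailSup hξα⟩,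
    tendsto_measure_of_tendsto_measure_compl ?_⟩
  refine tendsto_of_tendsto_of_tendsto_of_le_of_le tendsto_const_nhds
    (tendsto_measure_of_tail_le
      (S := fun n => gbarInnerExceedance g X Θbar ((n : ℝ) ^ (-ξ)) (K n) (m n)) tail hξα
      (half_pos hδ)) (fun _ => zero_le) fun n => measure_mono ?_
  exact compl_setOf_forall_subset_lamHat_subset g X
    ((Metric.closedBall_subset_ball (half_lt_self hδ)).trans hball) _ _ _ _

/-- Lemma 1 of the paper: uniform bound for λᵀ ḡ^{(k)}(θ) over the shrinking ball Λ_n. -/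
theorem ssmel_lemma1
    {d p r : ℕ} (hp : 0 < p) (hpr : p ≤ r)
    {Ω : Type} [MeasurableSpace Ω] (μ : Measure Ω) [IsProbabilityMeasure μ]
    (X : ℕ → Ω → EuclideanSpace ℝ (Fin d))
    (hXmeas : ∀ i, Measurable (X i))
    (hXindep : ProbabilityTheory.iIndepFun X μ)
    (hXident : ∀ i, μ.map (X i) = μ.map (X 0))
    (g : EuclideanSpace ℝ (Fin d) → EuclideanSpace ℝ (Fin p) → EuclideanSpace ℝ (Fin r))
    (θ₀ : EuclideanSpace ℝ (Fin p))
    (Θbar : Set (EuclideanSpace ℝ (Fin p)))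
    -- (A1)
    (hΘcompact : IsCompact Θbar)
    (hθ₀int : θ₀ ∈ interior Θbar)
    (hθ₀sol : ∫ x, g x θ₀ ∂(μ.map (X 0)) = 0)
    (hθ₀uniq : ∀ θ ∈ Θbar, ∫ x, g x θ ∂(μ.map (X 0)) = 0 → θ = θ₀)
    -- (A2)
    (hgcont : ∀ᵐ x ∂(μ.map (X 0)), ContinuousOn (fun θ => g x θ) Θbar)
    (Nb : Set (EuclideanSpace ℝ (Fin p))) (hNopen : IsOpen Nb) (hθ₀N : θ₀ ∈ Nb)
    (Dg : EuclideanSpace ℝ (Fin d) → EuclideanSpace ℝ (Fin p) → Matrix (Fin r) (Fin p) ℝ)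
    (hgdiff : ∀ᵐ x ∂(μ.map (X 0)), ∀ θ ∈ Nb,
      HasFDerivAt (fun θ' => g x θ')
        (LinearMap.toContinuousLinearMap (Matrix.toEuclideanLin (Dg x θ))) θ)
    (hgdiffCont : ∀ᵐ x ∂(μ.map (X 0)), ContinuousOn (fun θ => Dg x θ) Nb)
    -- (A3)
    (α : ℝ) (hα : 2 < α)
    (hgmoment : Integrable (fun x => (⨆ θ ∈ Θbar, ‖g x θ‖) ^ α) (μ.map (X 0)))
    -- sample splitting: n = K n * m n subsets of size m n, K n → ∞
    (K m : ℕ → ℕ) (hKm : ∀ n, K n * m n = n) (hK : Tendsto K atTop atTop)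
    -- the open interval 𝒱 ∋ 0
    (V : Set ℝ) (hVopen : IsOpen V) (hV0 : (0:ℝ) ∈ V)
    :
    ∀ ξ : ℝ, 1 / α < ξ → ξ < 1 / 2 →
      (IsBigOp μ
        (fun n ω => ⨆ θ ∈ Θbar, ⨆ lam ∈ {l : EuclideanSpace ℝ (Fin r) | ‖l‖ ≤ (n : ℝ) ^ (-ξ)},
          ⨆ k ∈ Finset.range (K n), |⟪lam, gbar g X (m n) k θ ω⟫|)
        (fun n => (n : ℝ) ^ (-ξ + 1 / α))
      ∧ TendstoInMeasure μ
        (fun (n : ℕ) ω => ⨆ θ ∈ Θbar, ⨆ lam ∈ {l : EuclideanSpace ℝ (Fin r) | ‖l‖ ≤ (n : ℝ) ^ (-ξ)},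
          ⨆ k ∈ Finset.range (K n), |⟪lam, gbar g X (m n) k θ ω⟫|)
        atTop (fun _ => 0))
      ∧ Tendsto
        (fun (n : ℕ) => μ {ω | ∀ θ ∈ Θbar,
          {l : EuclideanSpace ℝ (Fin r) | ‖l‖ ≤ (n : ℝ) ^ (-ξ)}
            ⊆ LamHat g X V (K n) (m n) θ ω})
        atTop (𝓝 1) :=
  ssmel_lemma1_general μ X hXmeas hXident g Θbar hΘcompact hgcont α hα hgmoment K m hKm V hVopen hV0
end
end

section
/- Let g₁,…,g_n ∈ ℝ^r and suppose λ ∈ ℝ^r satisfies 1 + λᵀg_i > 0 for all i = 1,…,n and (1/n) Σ_{i=1}^n g_i / (1 + λᵀg_i) = 0. Define p_i = 1 / (n(1 + λᵀg_i)). Then: (i) p_i > 0 for all i; (ii) Σ_{i=1}^n p_i = 1; (iii) Σ_{i=1}^n p_i g_i = 0; and (iv) for any weights q₁,…,q_n with q_i ≥ 0, Σ_{i=1}^n q_i = 1 and Σ_{i=1}^n q_i g_i = 0, one has Π_{i=1}^n (n q_i) ≤ Π_{i=1}^n (n p_i). Consequently the empirical likelihood ratio satisfies R = Π_{i=1}^n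 (n p_i) and −log R = Σ_{i=1}^n log(1 + λᵀg_i). -/
open MeasureTheory Filter Real
open scoped BigOperators Topology RealInnerProductSpace

noncomputable section

/-- The Lagrange-multiplier characterization of the empirical likelihood weights:
if `λ` satisfies `1 + λᵀgᵢ > 0` for all `i` and `n⁻¹ ∑ᵢ gᵢ/(1 + λᵀgᵢ) = 0`, then the weights
`pᵢ = 1/(n(1 + λᵀgᵢ))` are a probability vector satisfying the moment constraint, they maximize
`∏ᵢ (n qᵢ)` among all such probability vectors, the empirical likelihood ratio
`R = sup{∏ (n qᵢ)}` equals `∏ (n pᵢ)`, and `-log R = ∑ log(1 + λᵀgᵢ)`. -/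
theorem el_lagrange_characterization {r n : ℕ} (hn : 0 < n)
    (g : Fin n → EuclideanSpace ℝ (Fin r)) (lam : EuclideanSpace ℝ (Fin r))
    (hpos : ∀ i, 0 < 1 + ⟪lam, g i⟫)
    (hlam : (n : ℝ)⁻¹ • ∑ i, (1 + ⟪lam, g i⟫)⁻¹ • g i = 0)
    (p : Fin n → ℝ) (hpdef : ∀ i, p i = ((n : ℝ) * (1 + ⟪lam, g i⟫))⁻¹)
    (R : ℝ)
    (hR : R = sSup {x : ℝ | ∃ q : Fin n → ℝ,
      (∀ i, 0 ≤ q i) ∧ ∑ i, q i = 1 ∧ ∑ i, q i • g i = 0 ∧ x = ∏ i, (n : ℝ) * q i}) :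
    (∀ i, 0 < p i) ∧
    (∑ i, p i = 1) ∧
    (∑ i, p i • g i = 0) ∧
    (∀ q : Fin n → ℝ, (∀ i, 0 ≤ q i) → ∑ i, q i = 1 → ∑ i, q i • g i = 0 →
      ∏ i, (n : ℝ) * q i ≤ ∏ i, (n : ℝ) * p i) ∧
    R = ∏ i, (n : ℝ) * p i ∧
    -Real.log R = ∑ i, Real.log (1 + ⟪lam, g i⟫) := by
  have hn0 : (0:ℝ) < (n:ℝ) := by exact_mod_cast hn
  have hn' : (n:ℝ) ≠ 0 := ne_of_gt hn0
  -- the sum itself vanishes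
  have hS : ∑ i, (1 + ⟪lam, g i⟫)⁻¹ • g i = 0 := by
    rcases smul_eq_zero.mp hlam with h | h
    · exact absurd h (inv_ne_zero hn')
    · exact h
  -- inner product with lam
  have hinner : ∑ i, (1 + ⟪lam, g i⟫)⁻¹ * ⟪lam, g i⟫ = 0 := by
    have h0 : ⟪lam, ∑ i, (1 + ⟪lam, g i⟫)⁻¹ • g i⟫ = 0 := by
      rw [hS, inner_zero_right]
    rw [inner_sum] at h0
    simp only [real_inner_smul_right] at h0
    exact h0
  have hsuminv : ∑ i, (1 + ⟪lam, g i⟫)⁻¹ = (n:ℝ) := by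
    have key : ∀ i : Fin n, (1 + ⟪lam, g i⟫)⁻¹ =
        1 - (1 + ⟪lam, g i⟫)⁻¹ * ⟪lam, g i⟫ := by
      intro i
      obtain ⟨a, ha⟩ : ∃ a, ⟪lam, g i⟫ = a := ⟨_, rfl⟩
      have h : (0:ℝ) < 1 + a := ha ▸ hpos i
      have h' : (1:ℝ) + a ≠ 0 := h.ne'
      rw [ha]
      field_simp
      ring
    rw [Finset.sum_congr rfl (fun i _ => key i), Finset.sum_sub_distrib, hinner]
    simp
  have hppos : ∀ i, 0 < p i := by
    intro i; rw [hpdef i]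
    exact inv_pos.mpr (mul_pos hn0 (hpos i))
  have hnp : ∀ i, (n:ℝ) * p i = (1 + ⟪lam, g i⟫)⁻¹ := by
    intro i
    rw [hpdef i, mul_inv, ← mul_assoc, mul_inv_cancel₀ hn', one_mul]
  have hpsum : ∑ i, p i = 1 := by
    have h1 : ∑ i, p i = (n:ℝ)⁻¹ * ∑ i, (1 + ⟪lam, g i⟫)⁻¹ := by
      rw [Finset.mul_sum]
      refine Finset.sum_congr rfl fun i _ => ?_
      rw [hpdef i, mul_inv]
    rw [h1, hsuminv, inv_mul_cancel₀ hn']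
  have hpmom : ∑ i, p i • g i = 0 := by
    have h1 : ∑ i, p i • g i = (n:ℝ)⁻¹ • ∑ i, (1 + ⟪lam, g i⟫)⁻¹ • g i := by
      rw [Finset.smul_sum]
      refine Finset.sum_congr rfl fun i _ => ?_
      rw [hpdef i, mul_inv, smul_smul]
    rw [h1, hS, smul_zero]
  have hprodpos : 0 < ∏ i, (n:ℝ) * p i :=
    Finset.prod_pos fun i _ => mul_pos hn0 (hppos i)
  -- (iv)
  have hmax : ∀ q : Fin n → ℝ, (∀ i, 0 ≤ q i) → ∑ i, q i = 1 → ∑ i, q i • g i = 0 →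
      ∏ i, (n : ℝ) * q i ≤ ∏ i, (n : ℝ) * p i := by
    intro q hq0 hq1 hqm
    by_cases hz : ∃ i, q i = 0
    · rcases hz with ⟨i, hi⟩
      have h1 : ∏ i, (n:ℝ) * q i = 0 :=
        Finset.prod_eq_zero (Finset.mem_univ i) (by rw [hi, mul_zero])
      rw [h1]; exact hprodpos.le
    · push_neg at hz
      have hqpos : ∀ i, 0 < q i := fun i => lt_of_le_of_ne (hq0 i) (Ne.symm (hz i))
      have hratio : ∑ i, q i / p i = (n:ℝ) := by
        have hqinner : ∑ i, q i * ⟪lam, g i⟫ = 0 := by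
          have h0 : ⟪lam, ∑ i, q i • g i⟫ = 0 := by rw [hqm, inner_zero_right]
          rw [inner_sum] at h0
          simp only [real_inner_smul_right] at h0
          exact h0
        have key : ∀ i : Fin n, q i / p i = (n:ℝ) * q i + (n:ℝ) * (q i * ⟪lam, g i⟫) := by
          intro i
          obtain ⟨a, ha⟩ : ∃ a, ⟪lam, g i⟫ = a := ⟨_, rfl⟩
          rw [hpdef i, ha, div_eq_mul_inv, inv_inv]
          ring
        rw [Finset.sum_congr rfl (fun i _ => key i), Finset.sum_add_distrib,
          ← Finset.mul_sum, ← Finset.mul_sum, hq1, hqinner]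
        ring
      have hlogsum : ∑ i, Real.log ((n:ℝ) * q i) ≤ ∑ i, Real.log ((n:ℝ) * p i) := by
        have step : ∀ i : Fin n, Real.log ((n:ℝ) * q i) - Real.log ((n:ℝ) * p i)
            ≤ q i / p i - 1 := by
          intro i
          have h1 : Real.log ((n:ℝ) * q i) - Real.log ((n:ℝ) * p i)
              = Real.log (q i / p i) := by
            rw [Real.log_div (hqpos i).ne' (hppos i).ne',
              Real.log_mul hn' (hqpos i).ne', Real.log_mul hn' (hppos i).ne']
            ring
          rw [h1]
          exact Real.log_le_sub_one_of_pos (div_pos (hqpos i) (hppos i))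
        have h2 := Finset.sum_le_sum (fun i (_ : i ∈ Finset.univ) => step i)
        rw [Finset.sum_sub_distrib, Finset.sum_sub_distrib, hratio] at h2
        simpa using h2
      calc ∏ i, (n:ℝ) * q i
          = Real.exp (∑ i, Real.log ((n:ℝ) * q i)) := by
            rw [Real.exp_sum]
            exact (Finset.prod_congr rfl fun i _ =>
              (Real.exp_log (mul_pos hn0 (hqpos i))).symm)
        _ ≤ Real.exp (∑ i, Real.log ((n:ℝ) * p i)) := Real.exp_le_exp.mpr hlogsum
        _ = ∏ i, (n:ℝ) * p i := by
            rw [Real.exp_sum]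
            exact Finset.prod_congr rfl fun i _ => Real.exp_log (mul_pos hn0 (hppos i))
  have hmem : (∏ i, (n:ℝ) * p i) ∈ {x : ℝ | ∃ q : Fin n → ℝ,
      (∀ i, 0 ≤ q i) ∧ ∑ i, q i = 1 ∧ ∑ i, q i • g i = 0 ∧ x = ∏ i, (n : ℝ) * q i} :=
    ⟨p, fun i => (hppos i).le, hpsum, hpmom, rfl⟩
  have hub : ∀ x ∈ {x : ℝ | ∃ q : Fin n → ℝ,
      (∀ i, 0 ≤ q i) ∧ ∑ i, q i = 1 ∧ ∑ i, q i • g i = 0 ∧ x = ∏ i, (n : ℝ) * q i},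
      x ≤ ∏ i, (n:ℝ) * p i := by
    rintro x ⟨q, hq0, hq1, hqm, rfl⟩
    exact hmax q hq0 hq1 hqm
  have hReq : R = ∏ i, (n:ℝ) * p i := by
    rw [hR]
    exact le_antisymm (csSup_le ⟨_, hmem⟩ hub) (le_csSup ⟨_, hub⟩ hmem)
  refine ⟨hppos, hpsum, hpmom, hmax, hReq, ?_⟩
  rw [hReq, Real.log_prod (fun i _ => (mul_pos hn0 (hppos i)).ne')]
  rw [← Finset.sum_neg_distrib]
  refine Finset.sum_congr rfl fun i _ => ?_
  rw [hnp i, Real.log_inv, neg_neg]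
end
end
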